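/- Let ω = exp(2πi/5) and let c₀, c₁, c₂, c₃, c₄ be complex numbers (indices taken modulo 5). For k = 0, …, 4 let S_k be the 2×2 complex matrix with rows (c_k, 1) and (−ω, 0). Then S₄·S₃·S₂·S₁·S₀ equals the identity matrix if and only if c_k + ω² c_{k+2} c_{k+3} − ω³ = 0 for every k modulo 5. -/

import Mathlib

/-!
Only `ω⁵ = 1` matters, so we work over any commutative ring. Splitting the product as
`(S₄S₃)(S₂S₁S₀)`, where `det (S₄S₃) = ω²` is a unit, it equals `1` iff
`ω² S₂S₁S₀ = adj (S₄S₃) = adj S₃ · adj S₄`. Modulo `ω⁵ = 1`, the four entries of this equation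
are the relations with `k = 4, 3, 1` and, given the one with `k = 4`, the one with `k = 2`.
Since `AB = 1 ↔ BA = 1`, the product condition is invariant under the cyclic shift
`c ↦ c (· + 1)`, and the shifted condition yields the remaining relation `k = 0`.
-/

open Complex

/-- `ω = exp(2πi/5)`. -/
noncomputable def ω5 : ℂ := Complex.exp (2 * (Real.pi : ℂ) * Complex.I / 5)

/-- The Stokes matrix `S_k` built from the numbers `c_k`. -/
noncomputable def Smat (c : ZMod 5 → ℂ) (k : ZMod 5) : Matrix (Fin 2) (Fin 2) ℂ :=
  !![c k, 1; -ω5, 0]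

theorem ω5_pow_five : ω5 ^ 5 = 1 := by
  rw [ω5, ← Complex.exp_nat_mul, ← Complex.exp_two_pi_mul_I]
  push_cast
  ring_nf

theorem Matrix.mul_eq_one_iff_det_smul_eq_adjugate {n R : Type*} [Fintype n] [DecidableEq n]
    [CommRing R] {A B : Matrix n n R} (hA : IsUnit A.det) :
    A * B = 1 ↔ A.det • B = A.adjugate := by
  constructor
  · intro h
    rw [← Matrix.mul_one A.adjugate, ← h, ← Matrix.mul_assoc, Matrix.adjugate_mul,
      Matrix.smul_mul, Matrix.one_mul]
  · intro h
    apply hA.smul_left_cancel.mp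
    rw [← Matrix.mul_smul, h, Matrix.mul_adjugate]

section Stokes

variable {R : Type*} [CommRing R] {ω : R}

def stokesMatrix (ω a : R) : Matrix (Fin 2) (Fin 2) R :=
  !![a, 1; -ω, 0]

def stokesProduct (ω : R) (c : ZMod 5 → R) : Matrix (Fin 2) (Fin 2) R :=
  stokesMatrix ω (c 4) * stokesMatrix ω (c 3) * stokesMatrix ω (c 2) * stokesMatrix ω (c 1) *
    stokesMatrix ω (c 0)

theorem det_stokesMatrix (a : R) : (stokesMatrix ω a).det = ω := by
  simp [stokesMatrix, Matrix.det_fin_two_of]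

theorem adjugate_stokesMatrix (a : R) : (stokesMatrix ω a).adjugate = !![0, -1; ω, a] := by
  simp [stokesMatrix, Matrix.adjugate_fin_two_of]

theorem stokesProduct_shift_eq_one {c : ZMod 5 → R} (h : stokesProduct ω c = 1) :
    stokesProduct ω (fun k => c (k + 1)) = 1 := by
  rw [stokesProduct, mul_eq_one_comm] at h
  simp only [stokesProduct, Matrix.mul_assoc] at h ⊢
  exact h

theorem stokesProduct_eq_one_iff_four_relations (hω : ω ^ 5 = 1) (c : ZMod 5 → R) :
    stokesProduct ω c = 1 ↔
      c 1 + ω ^ 2 * c 3 * c 4 - ω ^ 3 = 0 ∧ c 2 + ω ^ 2 * c 4 * c 0 - ω ^ 3 = 0 ∧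
        c 3 + ω ^ 2 * c 0 * c 1 - ω ^ 3 = 0 ∧ c 4 + ω ^ 2 * c 1 * c 2 - ω ^ 3 = 0 := by
  have hunit : IsUnit ω := IsUnit.of_pow_eq_one hω (by norm_num)
  have hdet : (stokesMatrix ω (c 4) * stokesMatrix ω (c 3)).det = ω * ω := by
    rw [Matrix.det_mul, det_stokesMatrix, det_stokesMatrix]
  rw [stokesProduct, Matrix.mul_assoc _ _ (stokesMatrix ω (c 0)), Matrix.mul_assoc _ _ (_ * _),
    Matrix.mul_eq_one_iff_det_smul_eq_adjugate (hdet ▸ hunit.mul hunit), hdet,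
    Matrix.adjugate_mul_distrib, adjugate_stokesMatrix, adjugate_stokesMatrix]
  simp only [stokesMatrix, Matrix.cons_mul, Nat.succ_eq_add_one, Nat.reduceAdd,
    Matrix.vecMul_cons, Matrix.head_cons, Matrix.smul_cons, smul_eq_mul, mul_one,
    Matrix.smul_empty, Matrix.tail_cons, one_smul, Matrix.empty_vecMul, add_zero, Matrix.add_cons,
    Matrix.empty_add_empty, neg_smul, Matrix.neg_cons, Matrix.neg_empty, zero_smul,
    Matrix.empty_mul, Equiv.symm_apply_apply, Matrix.smul_of, mul_neg, zero_add, mul_zero,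
    EmbeddingLike.apply_eq_iff_eq, Matrix.vecCons_inj, and_true]
  constructor
  · rintro ⟨⟨h00, h01⟩, h10, h11⟩
    have h4 : c 4 + ω ^ 2 * c 1 * c 2 - ω ^ 3 = 0 := by linear_combination h01
    refine ⟨?_, ?_, ?_, h4⟩
    · linear_combination (-ω ^ 2) * h11
        - (c 1 + ω ^ 2 * c 3 * c 4 - ω ^ 3 - ω ^ 2 * (c 3 * c 4 - ω)) * hω
    · linear_combination (-ω ^ 2) * h00 + ω ^ 2 * c 0 * h4
        - (c 2 + ω ^ 2 * c 4 * c 0 - ω ^ 3 - ω ^ 2 * (c 0 * c 4 - ω)) * hω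
    · linear_combination (-ω ^ 4) * h10 - (c 3 + ω ^ 2 * c 0 * c 1 - ω ^ 3) * hω
  · rintro ⟨h1, h2, h3, h4⟩
    exact ⟨⟨by linear_combination c 0 * h4 - ω ^ 3 * h2 + (c 0 * c 4 - ω) * hω,
      by linear_combination h4⟩, by linear_combination (-ω) * h3,
      by linear_combination (-ω ^ 3) * h1 + (c 3 * c 4 - ω) * hω⟩

theorem stokesProduct_eq_one_iff (hω : ω ^ 5 = 1) (c : ZMod 5 → R) :
    stokesProduct ω c = 1 ↔ ∀ k, c k + ω ^ 2 * c (k + 2) * c (k + 3) - ω ^ 3 = 0 := by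
  constructor
  · intro h k
    obtain ⟨h1, h2, h3, h4⟩ := (stokesProduct_eq_one_iff_four_relations hω c).mp h
    obtain ⟨-, -, -, h0⟩ :=
      (stokesProduct_eq_one_iff_four_relations hω _).mp (stokesProduct_shift_eq_one h)
    fin_cases k <;> assumption
  · intro h
    exact (stokesProduct_eq_one_iff_four_relations hω c).mpr ⟨h 1, h 2, h 3, h 4⟩

end Stokes

/-- `S₄·S₃·S₂·S₁·S₀ = 1` if and only if `c_k + ω² c_{k+2} c_{k+3} − ω³ = 0` for every `k`
modulo 5 (Propositions 3.2–3.3). -/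
theorem stokes_matrix_identity (c : ZMod 5 → ℂ) :
    Smat c 4 * Smat c 3 * Smat c 2 * Smat c 1 * Smat c 0 = 1 ↔
      ∀ k : ZMod 5, c k + ω5 ^ 2 * c (k + 2) * c (k + 3) - ω5 ^ 3 = 0 :=
  stokesProduct_eq_one_iff ω5_pow_five c
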